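/- arXiv:2209.09211 — 2 statements merged into one kernel-verified Lean document; each statement's English description precedes it below -/
import Mathlib

section
/- Let d ≥ K ≥ 2, n ≥ 1, N = Kn, τ > 0, and let (W,H) ∈ OB(d,K) × OB(d,N) be a Riemannian critical point of f. Then (W,H) is a global minimizer of f over OB(d,K) × OB(d,N) if and only if α_k ≤ −√n·‖G‖ for every k ∈ {1,…,K} and β_j ≤ −‖G‖/√n for every j ∈ {1,…,N}, where ‖G‖ denotes the spectral norm of G. -/
open scoped BigOperators Matrix

/-- The oblique manifold: matrices all of whose columns have unit Euclidean norm. -/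
def OB (p : ℕ) (ι : Type) [Fintype ι] : Set (Matrix (Fin p) ι ℝ) :=
  {M | ∀ j, ∑ i, (M i j) ^ 2 = 1}

/-- The softmax map `η(z)_j = exp(z_j) / ∑_ℓ exp(z_ℓ)`. -/
noncomputable def softmax {K : ℕ} (z : Fin K → ℝ) (j : Fin K) : ℝ :=
  Real.exp (z j) / ∑ ℓ, Real.exp (z ℓ)

/-- The logits `τ Wᵀ h_j` for the column `j = (k,i)` of `H`. -/
noncomputable def logits {d K n : ℕ} (τ : ℝ) (W : Matrix (Fin d) (Fin K) ℝ)
    (H : Matrix (Fin d) (Fin K × Fin n) ℝ) (j : Fin K × Fin n) : Fin K → ℝ :=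
  fun ℓ => τ * ∑ r, W r ℓ * H r j

/-- The gradient matrix `G`: its column indexed by `(k,i)` is `(1/N)(η(τ Wᵀ h_{k,i}) − e_k)`. -/
noncomputable def Gmat {d K n : ℕ} (τ : ℝ) (W : Matrix (Fin d) (Fin K) ℝ)
    (H : Matrix (Fin d) (Fin K × Fin n) ℝ) : Matrix (Fin K) (Fin K × Fin n) ℝ :=
  fun ℓ j => (1 / ((K : ℝ) * n)) * (softmax (logits τ W H j) ℓ - if ℓ = j.1 then 1 else 0)

/-- `ddiag A` is the diagonal matrix with the same diagonal as `A`. -/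
def ddiag {ι : Type} [Fintype ι] [DecidableEq ι] (A : Matrix ι ι ℝ) : Matrix ι ι ℝ :=
  Matrix.diagonal fun i => A i i

/-- `(W,H)` is a Riemannian critical point of `f` if
`H Gᵀ = W ddiag(Wᵀ H Gᵀ)` and `W G = H ddiag(Hᵀ W G)`. -/
noncomputable def IsCriticalPoint {d K n : ℕ} (τ : ℝ) (W : Matrix (Fin d) (Fin K) ℝ)
    (H : Matrix (Fin d) (Fin K × Fin n) ℝ) : Prop :=
  H * (Gmat τ W H)ᵀ = W * ddiag (Wᵀ * (H * (Gmat τ W H)ᵀ)) ∧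
  W * Gmat τ W H = H * ddiag (Hᵀ * (W * Gmat τ W H))

/-- `α_k = ⟨w_k, H gᵏ⟩` where `gᵏ` is the `k`-th row of `G`. -/
noncomputable def alphaCoef {d K n : ℕ} (τ : ℝ) (W : Matrix (Fin d) (Fin K) ℝ)
    (H : Matrix (Fin d) (Fin K × Fin n) ℝ) (k : Fin K) : ℝ :=
  ∑ r, W r k * ∑ j, H r j * Gmat τ W H k j

/-- `β_j = ⟨h_j, W g_j⟩` where `g_j` is the `j`-th column of `G`. -/
noncomputable def betaCoef {d K n : ℕ} (τ : ℝ) (W : Matrix (Fin d) (Fin K) ℝ)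
    (H : Matrix (Fin d) (Fin K × Fin n) ℝ) (j : Fin K × Fin n) : ℝ :=
  ∑ r, H r j * ∑ ℓ, W r ℓ * Gmat τ W H ℓ j

/-- The cross-entropy loss `L_CE(z,k) = log (∑_ℓ exp (z_ℓ)) − z_k`. -/
noncomputable def LCE {K : ℕ} (z : Fin K → ℝ) (k : Fin K) : ℝ :=
  Real.log (∑ ℓ, Real.exp (z ℓ)) - z k

/-- The cross-entropy risk `f(W,H) = (1/N) ∑_k ∑_i L_CE(τ Wᵀ h_{k,i}, k)` with `N = K n`. -/
noncomputable def ceRisk {d K n : ℕ} (τ : ℝ) (W : Matrix (Fin d) (Fin K) ℝ)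
    (H : Matrix (Fin d) (Fin K × Fin n) ℝ) : ℝ :=
  (1 / ((K : ℝ) * n)) * ∑ k : Fin K, ∑ i : Fin n,
    LCE (fun ℓ => τ * ∑ r, W r ℓ * H r (k, i)) k

/-- Spectral norm (i.e. the `ℓ²→ℓ²` operator norm) of a matrix. -/
noncomputable def specNorm {K n : ℕ} (G : Matrix (Fin K) (Fin K × Fin n) ℝ) : ℝ :=
  ‖LinearMap.toContinuousLinearMap (Matrix.toEuclideanLin G)‖

/-!
Sufficiency: the risk is convex in the logits `τ Wᵀ H`, so
`f(W', H') ≥ f(W, H) + τ ⟨G, W'ᵀ H' - Wᵀ H⟩`. Here `⟨G, Wᵀ H⟩ = ∑ₖ αₖ ≤ -K √n ‖G‖`, while on the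
oblique manifold `⟨G, W'ᵀ H'⟩ ≥ -‖G‖ ‖W'‖_F ‖H'‖_F = -K √n ‖G‖`.

Necessity: comparing each cross-entropy term with its tangent plane at the simplex-ETF logits and
using the sum-of-squares identity (with `w̄ = ∑ₖ wₖ` and `k(j)` the class of sample `j`)
`2K (∑ⱼ ⟨w̄ - K w_{k(j)}, hⱼ⟩ + K² n) = n K ‖w̄‖² + ∑ⱼ ‖w̄ - K w_{k(j)} + K hⱼ‖²`
gives `f ≥ f(ETF)`, with equality only if `w̄ = 0`, `h_{k,i} = w_k` and every softmax equals the ETF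
one. Since `d ≥ K` the ETF is feasible, so a global minimizer has this form. Then `G` is a positive
multiple of `𝟙𝟙ᵀ - K [ℓ = k]`, whose spectral norm is `K √n`, and `αₖ`, `βⱼ` attain the two bounds.
-/

open Finset

section Softmax

variable {K : ℕ}

lemma sum_exp_pos [NeZero K] (z : Fin K → ℝ) : 0 < ∑ ℓ, Real.exp (z ℓ) :=
  sum_pos (fun ℓ _ => Real.exp_pos (z ℓ)) univ_nonempty

lemma softmax_pos (z : Fin K → ℝ) (ℓ : Fin K) : 0 < softmax z ℓ :=
  have : NeZero K := NeZero.of_pos ℓ.pos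
  div_pos (Real.exp_pos _) (sum_exp_pos z)

lemma sum_softmax [NeZero K] (z : Fin K → ℝ) : ∑ ℓ, softmax z ℓ = 1 := by
  simp only [softmax, ← sum_div, div_self (sum_exp_pos z).ne']

lemma softmax_add_const (z : Fin K → ℝ) (c : ℝ) : softmax (fun ℓ => z ℓ + c) = softmax z := by
  ext ℓ
  simp only [softmax, Real.exp_add, ← sum_mul]
  exact mul_div_mul_right _ _ (Real.exp_ne_zero c)

lemma sum_exp_eq_mul_sum_softmax_mul (z z' : Fin K → ℝ) :
    ∑ ℓ, Real.exp (z' ℓ)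
      = (∑ ℓ, Real.exp (z ℓ)) * ∑ ℓ, softmax z ℓ * Real.exp (z' ℓ - z ℓ) := by
  rw [mul_sum]
  refine sum_congr rfl fun ℓ _ => ?_
  have : NeZero K := NeZero.of_pos ℓ.pos
  rw [Real.exp_sub, softmax]
  field_simp [(sum_exp_pos z).ne']

lemma log_sum_exp_add_le [NeZero K] (z z' : Fin K → ℝ) :
    Real.log (∑ ℓ, Real.exp (z ℓ)) + ∑ ℓ, softmax z ℓ * (z' ℓ - z ℓ)
      ≤ Real.log (∑ ℓ, Real.exp (z' ℓ)) := by
  have jensen : Real.exp (∑ ℓ, softmax z ℓ * (z' ℓ - z ℓ))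
      ≤ ∑ ℓ, softmax z ℓ * Real.exp (z' ℓ - z ℓ) :=
    convexOn_exp.map_sum_le (fun ℓ _ => (softmax_pos z ℓ).le) (sum_softmax z) (fun _ _ => trivial)
  have hpos : 0 < ∑ ℓ, softmax z ℓ * Real.exp (z' ℓ - z ℓ) := (Real.exp_pos _).trans_le jensen
  rw [sum_exp_eq_mul_sum_softmax_mul z z', Real.log_mul (sum_exp_pos z).ne' hpos.ne']
  gcongr
  exact (Real.le_log_iff_exp_le hpos).2 jensen

lemma softmax_eq_of_log_sum_exp_le [NeZero K] (z z' : Fin K → ℝ)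
    (h : Real.log (∑ ℓ, Real.exp (z' ℓ))
      ≤ Real.log (∑ ℓ, Real.exp (z ℓ)) + ∑ ℓ, softmax z ℓ * (z' ℓ - z ℓ)) :
    softmax z' = softmax z := by
  have hpos : 0 < ∑ ℓ, softmax z ℓ * Real.exp (z' ℓ - z ℓ) :=
    sum_pos (fun ℓ _ => mul_pos (softmax_pos z ℓ) (Real.exp_pos _)) univ_nonempty
  rw [sum_exp_eq_mul_sum_softmax_mul z z', Real.log_mul (sum_exp_pos z).ne' hpos.ne',
    add_le_add_iff_left, Real.log_le_iff_le_exp hpos] at h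
  have hconst := strictConvexOn_exp.eq_of_le_map_sum (fun ℓ _ => softmax_pos z ℓ) (sum_softmax z)
    (fun _ _ => trivial) h
  obtain ⟨ℓ₀⟩ := (inferInstance : Nonempty (Fin K))
  rw [← softmax_add_const z (z' ℓ₀ - z ℓ₀)]
  congr 1
  ext ℓ
  linarith [hconst (mem_univ ℓ) (mem_univ ℓ₀)]

lemma sum_softmax_sub_ite_mul (z x : Fin K → ℝ) (k : Fin K) :
    ∑ ℓ, (softmax z ℓ - if ℓ = k then 1 else 0) * x ℓ = ∑ ℓ, softmax z ℓ * x ℓ - x k := by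
  simp [sub_mul, sum_sub_distrib]

lemma LCE_add_le (z z' : Fin K → ℝ) (k : Fin K) :
    LCE z k + ∑ ℓ, (softmax z ℓ - if ℓ = k then 1 else 0) * (z' ℓ - z ℓ) ≤ LCE z' k := by
  have : NeZero K := NeZero.of_pos k.pos
  have := log_sum_exp_add_le z z'
  rw [sum_softmax_sub_ite_mul, LCE, LCE]
  linarith

lemma softmax_eq_of_LCE_le (z z' : Fin K → ℝ) (k : Fin K)
    (h : LCE z' k ≤ LCE z k + ∑ ℓ, (softmax z ℓ - if ℓ = k then 1 else 0) * (z' ℓ - z ℓ)) :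
    softmax z' = softmax z := by
  have : NeZero K := NeZero.of_pos k.pos
  rw [sum_softmax_sub_ite_mul, LCE, LCE] at h
  exact softmax_eq_of_log_sum_exp_le z z' (by linarith)

end Softmax

section Frobenius

variable {l m n : Type*} [Fintype l] [Fintype m] [Fintype n]

def frobeniusInner (A B : Matrix m n ℝ) : ℝ := ∑ i, ∑ j, A i j * B i j

lemma frobeniusInner_transpose_mul (G : Matrix m n ℝ) (A : Matrix l m ℝ) (B : Matrix l n ℝ) :
    frobeniusInner G (Aᵀ * B) = frobeniusInner B (A * G) := by
  simp only [frobeniusInner, Matrix.mul_apply, Matrix.transpose_apply, mul_sum]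
  rw [sum_comm]
  refine (sum_congr rfl fun j _ => sum_comm).trans ?_
  rw [sum_comm]
  exact sum_congr rfl fun r _ => sum_congr rfl fun j _ => sum_congr rfl fun i _ => by ring

lemma frobeniusInner_sq_le (A B : Matrix m n ℝ) :
    frobeniusInner A B ^ 2 ≤ (∑ i, ∑ j, A i j ^ 2) * ∑ i, ∑ j, B i j ^ 2 := by
  simpa only [frobeniusInner, Fintype.sum_prod_type] using
    sum_mul_sq_le_sq_mul_sq (univ : Finset (m × n)) (fun p => A p.1 p.2) (fun p => B p.1 p.2)

open scoped Matrix.Norms.L2Operator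

lemma sum_sq_mulVec_le [DecidableEq n] (A : Matrix m n ℝ) (y : n → ℝ) :
    ∑ i, (A *ᵥ y) i ^ 2 ≤ ‖A‖ ^ 2 * ∑ j, y j ^ 2 := by
  have h := pow_le_pow_left₀ (norm_nonneg _) (A.l2_opNorm_mulVec (WithLp.toLp 2 y)) 2
  rw [mul_pow, EuclideanSpace.norm_sq_eq, EuclideanSpace.norm_sq_eq] at h
  simpa using h

lemma l2_opNorm_le_of_sum_sq_mulVec_le [DecidableEq n] (A : Matrix m n ℝ) {c : ℝ} (hc : 0 ≤ c)
    (h : ∀ y, ∑ i, (A *ᵥ y) i ^ 2 ≤ c ^ 2 * ∑ j, y j ^ 2) : ‖A‖ ≤ c := by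
  rw [Matrix.l2_opNorm_def]
  refine ContinuousLinearMap.opNorm_le_bound _ hc fun y => ?_
  rw [← sq_le_sq₀ (norm_nonneg _) (by positivity), mul_pow, EuclideanSpace.norm_sq_eq,
    EuclideanSpace.norm_sq_eq]
  simpa using h y.ofLp

lemma le_l2_opNorm_of_le_sum_sq_mulVec [DecidableEq n] (A : Matrix m n ℝ) {c : ℝ} (hc : 0 ≤ c)
    (y : n → ℝ) (hy : 0 < ∑ j, y j ^ 2) (h : c ^ 2 * ∑ j, y j ^ 2 ≤ ∑ i, (A *ᵥ y) i ^ 2) :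
    c ≤ ‖A‖ := by
  rw [← sq_le_sq₀ hc (norm_nonneg _)]
  exact le_of_mul_le_mul_right (h.trans (sum_sq_mulVec_le A y)) hy

lemma sum_sq_vecMul_le [DecidableEq m] [DecidableEq n] (G : Matrix m n ℝ) (x : m → ℝ) :
    ∑ j, (x ᵥ* G) j ^ 2 ≤ ‖G‖ ^ 2 * ∑ i, x i ^ 2 := by
  simpa [← Matrix.mulVec_transpose, ← Matrix.conjTranspose_eq_transpose_of_trivial,
    Matrix.l2_opNorm_conjTranspose] using sum_sq_mulVec_le Gᵀ x

lemma sum_sq_mul_le [DecidableEq m] [DecidableEq n] (A : Matrix l m ℝ) (G : Matrix m n ℝ) :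
    ∑ r, ∑ j, (A * G) r j ^ 2 ≤ ‖G‖ ^ 2 * ∑ r, ∑ i, A r i ^ 2 := by
  rw [mul_sum]
  exact sum_le_sum fun r _ => sum_sq_vecMul_le G (A r)

end Frobenius

lemma sum_sum_sq_eq_card_of_mem_OB {p : ℕ} {ι : Type} [Fintype ι] {M : Matrix (Fin p) ι ℝ}
    (hM : M ∈ OB p ι) : ∑ i, ∑ j, M i j ^ 2 = Fintype.card ι := by
  rw [sum_comm, sum_congr rfl fun j _ => hM j]
  simp

open scoped Matrix.Norms.L2Operator in
lemma neg_le_frobeniusInner_of_mem_OB {p : ℕ} {m ι : Type} [Fintype m] [DecidableEq m]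
    [Fintype ι] [DecidableEq ι] (G : Matrix m ι ℝ) {A : Matrix (Fin p) m ℝ}
    {B : Matrix (Fin p) ι ℝ} (hA : A ∈ OB p m) (hB : B ∈ OB p ι) :
    -(√(Fintype.card m * Fintype.card ι) * ‖G‖) ≤ frobeniusInner G (Aᵀ * B) := by
  have hsq : frobeniusInner G (Aᵀ * B) ^ 2 ≤ (√(Fintype.card m * Fintype.card ι) * ‖G‖) ^ 2 := by
    rw [frobeniusInner_transpose_mul, mul_pow, Real.sq_sqrt (by positivity)]
    calc _ ≤ (∑ r, ∑ j, B r j ^ 2) * ∑ r, ∑ j, (A * G) r j ^ 2 := frobeniusInner_sq_le _ _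
      _ ≤ Fintype.card ι * (‖G‖ ^ 2 * Fintype.card m) := by
        rw [sum_sum_sq_eq_card_of_mem_OB hB, ← sum_sum_sq_eq_card_of_mem_OB hA]
        gcongr
        exact sum_sq_mul_le A G
      _ = _ := by ring
  exact (abs_le_of_sq_le_sq' hsq (by positivity)).1

open scoped Matrix.Norms.L2Operator in
lemma specNorm_eq_l2_opNorm {K n : ℕ} (G : Matrix (Fin K) (Fin K × Fin n) ℝ) :
    specNorm G = ‖G‖ :=
  rfl

open scoped Matrix.Norms.L2Operator in
lemma specNorm_smul {K n : ℕ} (c : ℝ) (G : Matrix (Fin K) (Fin K × Fin n) ℝ) :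
    specNorm (c • G) = |c| * specNorm G := by
  rw [specNorm_eq_l2_opNorm, specNorm_eq_l2_opNorm, norm_smul, Real.norm_eq_abs]

section Risk

variable {d K n : ℕ}

lemma ceRisk_eq_sum (τ : ℝ) (W : Matrix (Fin d) (Fin K) ℝ) (H : Matrix (Fin d) (Fin K × Fin n) ℝ) :
    ceRisk τ W H = 1 / (K * n) * ∑ j, LCE (logits τ W H j) j.1 := by
  rw [ceRisk, Fintype.sum_prod_type]
  rfl

lemma ceRisk_add_le (τ : ℝ) (W W' : Matrix (Fin d) (Fin K) ℝ)
    (H H' : Matrix (Fin d) (Fin K × Fin n) ℝ) :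
    ceRisk τ W H + τ * (frobeniusInner (Gmat τ W H) (W'ᵀ * H')
      - frobeniusInner (Gmat τ W H) (Wᵀ * H)) ≤ ceRisk τ W' H' := by
  have hlin : τ * (frobeniusInner (Gmat τ W H) (W'ᵀ * H') - frobeniusInner (Gmat τ W H) (Wᵀ * H))
      = 1 / (K * n) * ∑ j, ∑ ℓ, (softmax (logits τ W H j) ℓ - if ℓ = j.1 then 1 else 0)
          * (logits τ W' H' j ℓ - logits τ W H j ℓ) := by
    simp only [frobeniusInner, ← sum_sub_distrib, mul_sum]
    rw [sum_comm]
    refine sum_congr rfl fun j _ => sum_congr rfl fun ℓ _ => ?_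
    simp only [Gmat, logits, Matrix.mul_apply, Matrix.transpose_apply]
    ring
  rw [ceRisk_eq_sum, ceRisk_eq_sum, hlin, ← mul_add, ← sum_add_distrib]
  gcongr with j
  exact LCE_add_le _ _ _

lemma alphaCoef_eq_sum (τ : ℝ) (W : Matrix (Fin d) (Fin K) ℝ)
    (H : Matrix (Fin d) (Fin K × Fin n) ℝ) (k : Fin K) :
    alphaCoef τ W H k = ∑ j, Gmat τ W H k j * (Wᵀ * H) k j := by
  simp only [alphaCoef, Matrix.mul_apply, Matrix.transpose_apply, mul_sum]
  rw [sum_comm]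
  exact sum_congr rfl fun j _ => sum_congr rfl fun r _ => by ring

lemma betaCoef_eq_sum (τ : ℝ) (W : Matrix (Fin d) (Fin K) ℝ)
    (H : Matrix (Fin d) (Fin K × Fin n) ℝ) (j : Fin K × Fin n) :
    betaCoef τ W H j = ∑ ℓ, Gmat τ W H ℓ j * (Wᵀ * H) ℓ j := by
  simp only [betaCoef, Matrix.mul_apply, Matrix.transpose_apply, mul_sum]
  rw [sum_comm]
  exact sum_congr rfl fun ℓ _ => sum_congr rfl fun r _ => by ring

lemma sum_alphaCoef (τ : ℝ) (W : Matrix (Fin d) (Fin K) ℝ)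
    (H : Matrix (Fin d) (Fin K × Fin n) ℝ) :
    ∑ k, alphaCoef τ W H k = frobeniusInner (Gmat τ W H) (Wᵀ * H) := by
  simp only [alphaCoef_eq_sum, frobeniusInner]

lemma ceRisk_le_of_alphaCoef_le {τ : ℝ} (hτ : 0 ≤ τ) {W : Matrix (Fin d) (Fin K) ℝ}
    {H : Matrix (Fin d) (Fin K × Fin n) ℝ}
    (hα : ∀ k, alphaCoef τ W H k ≤ -(√n * specNorm (Gmat τ W H)))
    {W' : Matrix (Fin d) (Fin K) ℝ} {H' : Matrix (Fin d) (Fin K × Fin n) ℝ}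
    (hW' : W' ∈ OB d (Fin K)) (hH' : H' ∈ OB d (Fin K × Fin n)) :
    ceRisk τ W H ≤ ceRisk τ W' H' := by
  have hWH : frobeniusInner (Gmat τ W H) (Wᵀ * H) ≤ -(K * √n * specNorm (Gmat τ W H)) := by
    rw [← sum_alphaCoef]
    calc ∑ k, alphaCoef τ W H k ≤ ∑ _k : Fin K, -(√n * specNorm (Gmat τ W H)) :=
          sum_le_sum fun k _ => hα k
      _ = _ := by simp; ring
  have hsqrt : √((K : ℝ) * (K * n)) = K * √n := by
    rw [← mul_assoc, Real.sqrt_mul (by positivity), Real.sqrt_mul_self (by positivity)]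
  have hW'H' : -(K * √n * specNorm (Gmat τ W H)) ≤ frobeniusInner (Gmat τ W H) (W'ᵀ * H') := by
    simpa [hsqrt, specNorm_eq_l2_opNorm] using neg_le_frobeniusInner_of_mem_OB (Gmat τ W H) hW' hH'
  exact (le_add_of_nonneg_right (mul_nonneg hτ (sub_nonneg.2 (hWH.trans hW'H')))).trans
    (ceRisk_add_le τ W W' H H')

end Risk

section SimplexETF

variable {K : ℕ}

noncomputable def etfLogits (K : ℕ) (τ : ℝ) (k : Fin K) : Fin K → ℝ :=
  fun ℓ => if ℓ = k then τ else -τ / (K - 1)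

noncomputable def etfPartition (K : ℕ) (τ : ℝ) : ℝ :=
  Real.exp τ + (K - 1) * Real.exp (-τ / (K - 1))

noncomputable def etfLoss (K : ℕ) (τ : ℝ) : ℝ := Real.log (etfPartition K τ) - τ

noncomputable def etfOffProb (K : ℕ) (τ : ℝ) : ℝ := Real.exp (-τ / (K - 1)) / etfPartition K τ

lemma sum_ite_eq_add_mul (k : Fin K) (a b : ℝ) :
    ∑ ℓ, (if ℓ = k then a else b) = a + (K - 1) * b := by
  rw [Fintype.sum_eq_add_sum_compl k, if_pos rfl,
    sum_congr rfl fun ℓ hℓ => if_neg (by simpa using hℓ), sum_const, card_compl, card_singleton,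
    Fintype.card_fin, nsmul_eq_mul, Nat.cast_sub k.pos, Nat.cast_one]

lemma etfPartition_pos (hK : 1 ≤ K) (τ : ℝ) : 0 < etfPartition K τ := by
  have : (0 : ℝ) ≤ K - 1 := sub_nonneg.2 (Nat.one_le_cast.2 hK)
  unfold etfPartition
  positivity

lemma etfOffProb_pos (hK : 1 ≤ K) (τ : ℝ) : 0 < etfOffProb K τ :=
  div_pos (Real.exp_pos _) (etfPartition_pos hK τ)

lemma sum_exp_etfLogits (τ : ℝ) (k : Fin K) :
    ∑ ℓ, Real.exp (etfLogits K τ k ℓ) = etfPartition K τ := by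
  simp only [etfLogits, apply_ite Real.exp]
  exact sum_ite_eq_add_mul k _ _

lemma LCE_etfLogits (τ : ℝ) (k : Fin K) : LCE (etfLogits K τ k) k = etfLoss K τ := by
  rw [LCE, sum_exp_etfLogits, etfLoss]
  simp [etfLogits]

lemma sum_etfLogits (hK : 2 ≤ K) (τ : ℝ) (k : Fin K) : ∑ ℓ, etfLogits K τ k ℓ = 0 := by
  have : (K : ℝ) - 1 ≠ 0 := by
    have : (2 : ℝ) ≤ K := by exact_mod_cast hK
    linarith
  simp only [etfLogits]
  rw [sum_ite_eq_add_mul]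
  field_simp
  norm_num

lemma softmax_etfLogits_sub (τ : ℝ) (k ℓ : Fin K) :
    softmax (etfLogits K τ k) ℓ - (if ℓ = k then 1 else 0)
      = etfOffProb K τ * (1 - K * if ℓ = k then 1 else 0) := by
  have hD := etfPartition_pos k.pos τ
  rw [softmax, sum_exp_etfLogits, etfOffProb]
  by_cases h : ℓ = k
  · simp only [etfLogits, h, if_true]
    field_simp
    rw [etfPartition, neg_div]
    ring
  · simp [etfLogits, h]

lemma sum_softmax_etfLogits_sub_mul (hK : 2 ≤ K) (τ : ℝ) (z : Fin K → ℝ) (k : Fin K) :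
    ∑ ℓ, (softmax (etfLogits K τ k) ℓ - if ℓ = k then 1 else 0) * (z ℓ - etfLogits K τ k ℓ)
      = etfOffProb K τ * (∑ ℓ, z ℓ - K * z k + K * τ) := by
  have hterm : ∀ ℓ, (softmax (etfLogits K τ k) ℓ - if ℓ = k then 1 else 0)
      * (z ℓ - etfLogits K τ k ℓ) = etfOffProb K τ * (z ℓ - etfLogits K τ k ℓ)
        - etfOffProb K τ * K * if ℓ = k then z ℓ - etfLogits K τ k ℓ else 0 := by
    intro ℓ
    rw [softmax_etfLogits_sub]
    split_ifs <;> ring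
  simp only [hterm, sum_sub_distrib, ← mul_sum, sum_ite_eq', mem_univ, if_true,
    sum_etfLogits hK]
  simp only [etfLogits, if_true]
  ring

lemma etfLoss_add_le_LCE (hK : 2 ≤ K) (τ : ℝ) (z : Fin K → ℝ) (k : Fin K) :
    etfLoss K τ + etfOffProb K τ * (∑ ℓ, z ℓ - K * z k + K * τ) ≤ LCE z k := by
  simpa only [LCE_etfLogits, sum_softmax_etfLogits_sub_mul hK] using
    LCE_add_le (etfLogits K τ k) z k

lemma softmax_eq_etf_of_LCE_le (hK : 2 ≤ K) (τ : ℝ) (z : Fin K → ℝ) (k : Fin K)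
    (h : LCE z k ≤ etfLoss K τ + etfOffProb K τ * (∑ ℓ, z ℓ - K * z k + K * τ)) :
    softmax z = softmax (etfLogits K τ k) :=
  softmax_eq_of_LCE_le _ _ k (by rwa [LCE_etfLogits, sum_softmax_etfLogits_sub_mul hK])

end SimplexETF

section EtfFrame

variable {d K : ℕ}

noncomputable def etfFrame (d K : ℕ) : Matrix (Fin d) (Fin K) ℝ :=
  fun r k =>
    if (r : ℕ) < K then √((K : ℝ) / (K - 1)) * ((if (r : ℕ) = k then 1 else 0) - 1 / K) else 0

lemma etfFrame_gram (hK : 2 ≤ K) (hdK : K ≤ d) (k ℓ : Fin K) :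
    ∑ r, etfFrame d K r k * etfFrame d K r ℓ = if k = ℓ then 1 else -1 / ((K : ℝ) - 1) := by
  have hK1 : (1 : ℝ) < K := by exact_mod_cast hK
  set F : ℕ → ℝ := fun m => if m < K then
      K / (K - 1) * (((if m = k then 1 else 0) - 1 / K) * ((if m = ℓ then 1 else 0) - 1 / K))
    else 0
  have hF : ∀ r : Fin d, etfFrame d K r k * etfFrame d K r ℓ = F r := by
    intro r
    by_cases hr : (r : ℕ) < K
    · simp only [etfFrame, F, hr, if_true]
      rw [mul_mul_mul_comm, Real.mul_self_sqrt (div_nonneg (by linarith) (by linarith))]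
    · simp only [etfFrame, F, hr, if_false, mul_zero]
  rw [sum_congr rfl fun r _ => hF r, Fin.sum_univ_eq_sum_range F, ← sum_range_add_sum_Ico F hdK,
    sum_eq_zero (s := Ico K d) fun m hm => if_neg (by simp at hm; omega), add_zero,
    ← Fin.sum_univ_eq_sum_range]
  simp only [F, Fin.is_lt, if_true, Fin.val_inj, ← mul_sum, mul_sub, sub_mul, ite_mul, one_mul,
    zero_mul, sum_sub_distrib, sum_ite_eq', mem_univ, sum_const, card_univ, Fintype.card_fin,
    nsmul_eq_mul]
  have : (K : ℝ) - 1 ≠ 0 := by linarith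
  split_ifs <;> field_simp <;> ring

lemma etfFrame_mem_OB (hK : 2 ≤ K) (hdK : K ≤ d) : etfFrame d K ∈ OB d (Fin K) := fun k => by
  simpa [sq] using etfFrame_gram hK hdK k k

lemma logits_etfFrame {n : ℕ} (hK : 2 ≤ K) (hdK : K ≤ d) (τ : ℝ) (j : Fin K × Fin n) :
    logits τ (etfFrame d K) ((etfFrame d K).submatrix id Prod.fst) j = etfLogits K τ j.1 := by
  ext ℓ
  simp only [logits, Matrix.submatrix_apply, id, etfFrame_gram hK hdK, etfLogits]
  split_ifs <;> ring

lemma ceRisk_etfFrame {n : ℕ} (hK : 2 ≤ K) (hdK : K ≤ d) (hn : 0 < n) (τ : ℝ) :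
    ceRisk τ (etfFrame d K) ((etfFrame d K).submatrix id Prod.fst : Matrix _ (Fin K × Fin n) ℝ)
      = etfLoss K τ := by
  have : (0 : ℝ) < K * n := by positivity
  simp only [ceRisk_eq_sum, logits_etfFrame hK hdK, LCE_etfLogits, sum_const, card_univ,
    Fintype.card_prod, Fintype.card_fin, nsmul_eq_mul, Nat.cast_mul]
  field_simp

end EtfFrame

lemma submatrix_mem_OB {p : ℕ} {ι κ : Type} [Fintype ι] [Fintype κ] {M : Matrix (Fin p) ι ℝ}
    (hM : M ∈ OB p ι) (f : κ → ι) : M.submatrix id f ∈ OB p κ :=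
  fun j => hM (f j)

section Collapse

variable {d K n : ℕ}

def marginSum (W : Matrix (Fin d) (Fin K) ℝ) (H : Matrix (Fin d) (Fin K × Fin n) ℝ) : ℝ :=
  ∑ j, (∑ ℓ, (Wᵀ * H) ℓ j - K * (Wᵀ * H) j.1 j)

lemma sum_sum_sub_mul_sq {W : Matrix (Fin d) (Fin K) ℝ} (hW : W ∈ OB d (Fin K)) :
    ∑ k, ∑ r, (∑ ℓ, W r ℓ - K * W r k) ^ 2 = K ^ 3 - K * ∑ r, (∑ ℓ, W r ℓ) ^ 2 := by
  have hrow : ∀ r, ∑ k, (∑ ℓ, W r ℓ - K * W r k) ^ 2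
      = K ^ 2 * ∑ k, W r k ^ 2 - K * (∑ ℓ, W r ℓ) ^ 2 := by
    intro r
    simp only [sub_sq, sum_add_distrib, sum_sub_distrib, sum_const, card_univ, Fintype.card_fin,
      nsmul_eq_mul, mul_pow, ← mul_sum]
    ring
  rw [sum_comm, sum_congr rfl fun r _ => hrow r, sum_sub_distrib, ← mul_sum, ← mul_sum,
    sum_sum_sq_eq_card_of_mem_OB hW, Fintype.card_fin]
  ring

lemma sum_sq_sub_mul_add_mul {H : Matrix (Fin d) (Fin K × Fin n) ℝ}
    (hH : H ∈ OB d (Fin K × Fin n)) (W : Matrix (Fin d) (Fin K) ℝ) (j : Fin K × Fin n) :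
    ∑ r, (∑ ℓ, W r ℓ - K * W r j.1 + K * H r j) ^ 2
      = ∑ r, (∑ ℓ, W r ℓ - K * W r j.1) ^ 2
        + 2 * K * (∑ ℓ, (Wᵀ * H) ℓ j - K * (Wᵀ * H) j.1 j) + K ^ 2 := by
  have hmargin : ∑ ℓ, (Wᵀ * H) ℓ j - K * (Wᵀ * H) j.1 j
      = ∑ r, (∑ ℓ, W r ℓ - K * W r j.1) * H r j := by
    simp only [Matrix.mul_apply, Matrix.transpose_apply, sub_mul, sum_sub_distrib, sum_mul,
      mul_sum, mul_assoc]
    rw [sum_comm]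
  have hunit : (K : ℝ) ^ 2 = ∑ r, K ^ 2 * H r j ^ 2 := by rw [← mul_sum, hH j, mul_one]
  rw [hmargin, mul_sum, hunit, ← sum_add_distrib, ← sum_add_distrib]
  exact sum_congr rfl fun r _ => by ring

lemma two_mul_marginSum_add {W : Matrix (Fin d) (Fin K) ℝ} {H : Matrix (Fin d) (Fin K × Fin n) ℝ}
    (hW : W ∈ OB d (Fin K)) (hH : H ∈ OB d (Fin K × Fin n)) :
    2 * K * (marginSum W H + K ^ 2 * n)
      = n * K * ∑ r, (∑ k, W r k) ^ 2
        + ∑ j : Fin K × Fin n, ∑ r, (∑ k, W r k - K * W r j.1 + K * H r j) ^ 2 := by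
  have hcls : ∑ j : Fin K × Fin n, ∑ r, (∑ ℓ, W r ℓ - K * W r j.1) ^ 2
      = n * (K ^ 3 - K * ∑ r, (∑ ℓ, W r ℓ) ^ 2) := by
    rw [← sum_sum_sub_mul_sq hW, Fintype.sum_prod_type, mul_sum]
    simp
  simp only [sum_sq_sub_mul_add_mul hH W, sum_add_distrib, hcls, ← mul_sum, marginSum, sum_const,
    card_univ, Fintype.card_prod, Fintype.card_fin, nsmul_eq_mul, Nat.cast_mul]
  ring

lemma neg_le_marginSum (hK : 0 < K) {W : Matrix (Fin d) (Fin K) ℝ}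
    {H : Matrix (Fin d) (Fin K × Fin n) ℝ} (hW : W ∈ OB d (Fin K)) (hH : H ∈ OB d (Fin K × Fin n)) :
    -(K ^ 2 * n) ≤ marginSum W H := by
  have h := two_mul_marginSum_add hW hH
  have : 0 ≤ 2 * K * (marginSum W H + K ^ 2 * n) := by rw [h]; positivity
  have := (mul_nonneg_iff_of_pos_left (by positivity : (0 : ℝ) < 2 * K)).1 this
  linarith

lemma collapse_of_marginSum_le (hK : 0 < K) (hn : 0 < n) {W : Matrix (Fin d) (Fin K) ℝ}
    {H : Matrix (Fin d) (Fin K × Fin n) ℝ} (hW : W ∈ OB d (Fin K)) (hH : H ∈ OB d (Fin K × Fin n))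
    (h : marginSum W H ≤ -(K ^ 2 * n)) :
    (∀ r, ∑ k, W r k = 0) ∧ H = W.submatrix id Prod.fst := by
  have hnK : (0 : ℝ) < n * K := by positivity
  have hzero : n * K * ∑ r, (∑ k, W r k) ^ 2
      + ∑ j : Fin K × Fin n, ∑ r, (∑ k, W r k - K * W r j.1 + K * H r j) ^ 2 = 0 := by
    have : 2 * K * (marginSum W H + K ^ 2 * n) ≤ 0 :=
      mul_nonpos_of_nonneg_of_nonpos (by positivity) (by linarith)
    rw [two_mul_marginSum_add hW hH] at this
    exact le_antisymm this (by positivity)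
  rw [add_eq_zero_iff_of_nonneg (by positivity) (by positivity), mul_eq_zero,
    or_iff_right hnK.ne', sum_eq_zero_iff_of_nonneg fun _ _ => by positivity,
    sum_eq_zero_iff_of_nonneg fun _ _ => by positivity] at hzero
  obtain ⟨hbar, hcol⟩ := hzero
  have hbar' : ∀ r, ∑ k, W r k = 0 := fun r =>
    pow_eq_zero_iff two_ne_zero |>.1 (hbar r (mem_univ r))
  refine ⟨hbar', ?_⟩
  ext r j
  have := (sum_eq_zero_iff_of_nonneg fun _ _ => by positivity).1 (hcol j (mem_univ j)) r
    (mem_univ r)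
  rw [hbar', pow_eq_zero_iff two_ne_zero] at this
  have hK' : (K : ℝ) ≠ 0 := by positivity
  simp only [Matrix.submatrix_apply, id]
  apply mul_left_cancel₀ hK'
  linarith

end Collapse

lemma sum_logits_sub_mul {d K n : ℕ} (τ : ℝ) (W : Matrix (Fin d) (Fin K) ℝ)
    (H : Matrix (Fin d) (Fin K × Fin n) ℝ) :
    ∑ j, (∑ ℓ, logits τ W H j ℓ - K * logits τ W H j j.1) = τ * marginSum W H := by
  simp only [marginSum, mul_sum, mul_sub]
  refine sum_congr rfl fun j _ => ?_
  simp only [logits, Matrix.mul_apply, Matrix.transpose_apply]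
  ring

theorem structure_of_ceRisk_le_etfLoss {d K n : ℕ} (hK : 2 ≤ K) (hn : 0 < n) {τ : ℝ} (hτ : 0 < τ)
    {W : Matrix (Fin d) (Fin K) ℝ} {H : Matrix (Fin d) (Fin K × Fin n) ℝ}
    (hW : W ∈ OB d (Fin K)) (hH : H ∈ OB d (Fin K × Fin n)) (hf : ceRisk τ W H ≤ etfLoss K τ) :
    (∀ r, ∑ k, W r k = 0) ∧ H = W.submatrix id Prod.fst ∧
      ∀ j, softmax (logits τ W H j) = softmax (etfLogits K τ j.1) := by
  set b := etfOffProb K τ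
  have hb : 0 < b := etfOffProb_pos (by omega) τ
  set gap : Fin K × Fin n → ℝ := fun j => LCE (logits τ W H j) j.1 - (etfLoss K τ
    + b * (∑ ℓ, logits τ W H j ℓ - K * logits τ W H j j.1 + K * τ))
  have hgap : ∀ j, 0 ≤ gap j := fun j => sub_nonneg.2 (etfLoss_add_le_LCE hK τ _ _)
  have hsum : ∑ j, gap j + b * τ * (marginSum W H + K ^ 2 * n) ≤ 0 := by
    have hN : (0 : ℝ) < K * n := by positivity
    rw [ceRisk_eq_sum, one_div_mul_eq_div, div_le_iff₀ hN] at hf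
    have : ∑ j, gap j = ∑ j, LCE (logits τ W H j) j.1 - K * n * etfLoss K τ
        - b * (τ * marginSum W H) - b * (K * n) * (K * τ) := by
      simp only [gap, sum_sub_distrib, ← sum_logits_sub_mul, sum_add_distrib, ← mul_sum,
        sum_const, card_univ, Fintype.card_prod, Fintype.card_fin, nsmul_eq_mul, Nat.cast_mul]
      ring
    rw [this]
    linarith
  have hmargin : 0 ≤ b * τ * (marginSum W H + K ^ 2 * n) :=
    mul_nonneg (by positivity) (by linarith [neg_le_marginSum (by omega) hW hH])
  have hgap_sum : 0 ≤ ∑ j, gap j := sum_nonneg fun j _ => hgap j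
  have hgap0 : ∀ j, gap j = 0 := fun j =>
    (sum_eq_zero_iff_of_nonneg fun j _ => hgap j).1 (by linarith) j (mem_univ j)
  have hmargin_le : marginSum W H ≤ -(K ^ 2 * n) := by
    have := nonpos_of_mul_nonpos_right
      (by linarith : b * τ * (marginSum W H + K ^ 2 * n) ≤ 0) (mul_pos hb hτ)
    linarith
  obtain ⟨hbar, hcollapse⟩ := collapse_of_marginSum_le (by omega) hn hW hH hmargin_le
  exact ⟨hbar, hcollapse, fun j => softmax_eq_etf_of_LCE_le hK τ _ _ (by linarith [hgap0 j])⟩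

section Contrast

variable {K n : ℕ}

def classContrast (K n : ℕ) : Matrix (Fin K) (Fin K × Fin n) ℝ :=
  fun ℓ j => 1 - K * if ℓ = j.1 then 1 else 0

lemma classContrast_mulVec (y : Fin K × Fin n → ℝ) (ℓ : Fin K) :
    (classContrast K n *ᵥ y) ℓ = ∑ j, y j - K * ∑ i, y (ℓ, i) := by
  have hblock : ∑ j : Fin K × Fin n, (if ℓ = j.1 then 1 else 0) * y j = ∑ i, y (ℓ, i) := by
    rw [Fintype.sum_prod_type, sum_eq_single ℓ (fun k _ hk => by simp [Ne.symm hk]) (by simp)]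
    simp
  simp only [Matrix.mulVec, dotProduct, classContrast, sub_mul, one_mul, sum_sub_distrib, mul_assoc,
    ← mul_sum, hblock]

open scoped Matrix.Norms.L2Operator in
lemma specNorm_classContrast (hK : 2 ≤ K) (hn : 0 < n) : specNorm (classContrast K n) = K * √n := by
  rw [specNorm_eq_l2_opNorm]
  have hsqrt : (K * √n : ℝ) ^ 2 = K ^ 2 * n := by rw [mul_pow, Real.sq_sqrt n.cast_nonneg]
  apply le_antisymm
  · refine l2_opNorm_le_of_sum_sq_mulVec_le _ (by positivity) fun y => ?_
    set s : Fin K → ℝ := fun ℓ => ∑ i, y (ℓ, i)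
    have hT : ∑ j, y j = ∑ ℓ, s ℓ := Fintype.sum_prod_type _
    have hexpand : ∑ ℓ, (classContrast K n *ᵥ y) ℓ ^ 2
        = K ^ 2 * ∑ ℓ, s ℓ ^ 2 - K * (∑ ℓ, s ℓ) ^ 2 := by
      simp only [classContrast_mulVec, ← hT, sub_sq, sum_add_distrib, sum_sub_distrib, sum_const,
        card_univ, Fintype.card_fin, nsmul_eq_mul, mul_pow, ← mul_sum]
      rw [hT]
      ring
    have hblock : ∑ ℓ, s ℓ ^ 2 ≤ n * ∑ j, y j ^ 2 := by
      rw [Fintype.sum_prod_type, mul_sum]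
      refine sum_le_sum fun ℓ _ => ?_
      simpa using sq_sum_le_card_mul_sum_sq (s := univ) (f := fun i => y (ℓ, i))
    rw [hexpand, hsqrt]
    nlinarith [sq_nonneg (∑ ℓ, s ℓ), (by positivity : (0 : ℝ) ≤ K)]
  · obtain ⟨a⟩ : Nonempty (Fin K) := ⟨⟨0, by omega⟩⟩
    set v : Fin K → ℝ := fun ℓ => 1 - K * if ℓ = a then 1 else 0
    have hv : ∑ ℓ, v ℓ = 0 := by simp [v, sum_sub_distrib]
    have hva : v a ≠ 0 := by
      have : (2 : ℝ) ≤ K := by exact_mod_cast hK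
      simp only [v, if_true]
      linarith
    have hy : ∑ j : Fin K × Fin n, v j.1 ^ 2 = n * ∑ ℓ, v ℓ ^ 2 := by
      simp [Fintype.sum_prod_type, mul_sum]
    have hAy : ∀ ℓ, (classContrast K n *ᵥ fun j => v j.1) ℓ = -(K * n * v ℓ) := by
      intro ℓ
      rw [classContrast_mulVec, Fintype.sum_prod_type]
      simp only [sum_const, card_univ, Fintype.card_fin, nsmul_eq_mul, ← mul_sum, hv]
      ring
    refine le_l2_opNorm_of_le_sum_sq_mulVec _ (by positivity) (fun j => v j.1) ?_ (le_of_eq ?_)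
    · rw [hy]
      exact mul_pos (by exact_mod_cast hn)
        (sum_pos' (fun ℓ _ => sq_nonneg (v ℓ)) ⟨a, mem_univ a, by positivity⟩)
    · simp only [hy, hAy, hsqrt, neg_sq, mul_pow, ← mul_sum]
      ring

end Contrast

section Collapsed

variable {d K n : ℕ} {W : Matrix (Fin d) (Fin K) ℝ}

lemma transpose_mul_self_apply_self (hW : W ∈ OB d (Fin K)) (k : Fin K) : (Wᵀ * W) k k = 1 := by
  simpa [Matrix.mul_apply, sq] using hW k

lemma sum_transpose_mul_self_apply_left (hbar : ∀ r, ∑ k, W r k = 0) (k : Fin K) :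
    ∑ ℓ, (Wᵀ * W) ℓ k = 0 := by
  simp only [Matrix.mul_apply, Matrix.transpose_apply]
  rw [sum_comm]
  simp [← sum_mul, hbar]

lemma sum_transpose_mul_self_apply_right (hbar : ∀ r, ∑ k, W r k = 0) (k : Fin K) :
    ∑ ℓ, (Wᵀ * W) k ℓ = 0 := by
  simp only [Matrix.mul_apply, Matrix.transpose_apply]
  rw [sum_comm]
  simp [← mul_sum, hbar]

lemma Gmat_eq_smul_classContrast {τ : ℝ} {H : Matrix (Fin d) (Fin K × Fin n) ℝ}
    (h : ∀ j, softmax (logits τ W H j) = softmax (etfLogits K τ j.1)) :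
    Gmat τ W H = (etfOffProb K τ / (K * n)) • classContrast K n := by
  ext ℓ j
  simp only [Gmat, h j, softmax_etfLogits_sub, Matrix.smul_apply, classContrast, smul_eq_mul]
  ring

lemma alphaCoef_of_collapse {τ c : ℝ} {H : Matrix (Fin d) (Fin K × Fin n) ℝ}
    (hW : W ∈ OB d (Fin K)) (hbar : ∀ r, ∑ k, W r k = 0) (hH : H = W.submatrix id Prod.fst)
    (hG : Gmat τ W H = c • classContrast K n) (k : Fin K) :
    alphaCoef τ W H k = -(c * K * n) := by
  have hgram : ∀ j : Fin K × Fin n, (Wᵀ * H) k j = (Wᵀ * W) k j.1 := fun j => by subst hH; rfl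
  have hterm : ∀ ℓ, c * (1 - K * if k = ℓ then 1 else 0) * (Wᵀ * W) k ℓ
      = c * (Wᵀ * W) k ℓ - c * K * if k = ℓ then (Wᵀ * W) k ℓ else 0 := by
    intro ℓ
    split_ifs <;> ring
  simp only [alphaCoef_eq_sum, hG, hgram, Matrix.smul_apply, classContrast, smul_eq_mul,
    Fintype.sum_prod_type, hterm]
  simp [sum_sub_distrib, ← mul_sum, sum_transpose_mul_self_apply_right hbar,
    transpose_mul_self_apply_self hW]
  ring

lemma betaCoef_of_collapse {τ c : ℝ} {H : Matrix (Fin d) (Fin K × Fin n) ℝ}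
    (hW : W ∈ OB d (Fin K)) (hbar : ∀ r, ∑ k, W r k = 0) (hH : H = W.submatrix id Prod.fst)
    (hG : Gmat τ W H = c • classContrast K n) (j : Fin K × Fin n) :
    betaCoef τ W H j = -(c * K) := by
  have hgram : ∀ ℓ, (Wᵀ * H) ℓ j = (Wᵀ * W) ℓ j.1 := fun ℓ => by subst hH; rfl
  have hterm : ∀ ℓ, c * (1 - K * if ℓ = j.1 then 1 else 0) * (Wᵀ * W) ℓ j.1
      = c * (Wᵀ * W) ℓ j.1 - c * K * if ℓ = j.1 then (Wᵀ * W) ℓ j.1 else 0 := by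
    intro ℓ
    split_ifs <;> ring
  simp only [betaCoef_eq_sum, hG, hgram, Matrix.smul_apply, classContrast, smul_eq_mul, hterm]
  simp [sum_sub_distrib, ← mul_sum, sum_transpose_mul_self_apply_left hbar,
    transpose_mul_self_apply_self hW]

end Collapsed

theorem critical_point_global_iff_alpha_beta_general (d K n : ℕ) (hK : 2 ≤ K) (hdK : K ≤ d) (hn : 1 ≤ n)
    (τ : ℝ) (hτ : 0 < τ)
    (W : Matrix (Fin d) (Fin K) ℝ) (H : Matrix (Fin d) (Fin K × Fin n) ℝ)
    (hW : W ∈ OB d (Fin K)) (hH : H ∈ OB d (Fin K × Fin n)) :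
    (∀ (W' : Matrix (Fin d) (Fin K) ℝ) (H' : Matrix (Fin d) (Fin K × Fin n) ℝ),
        W' ∈ OB d (Fin K) → H' ∈ OB d (Fin K × Fin n) → ceRisk τ W H ≤ ceRisk τ W' H')
      ↔ ((∀ k : Fin K, alphaCoef τ W H k ≤ -(Real.sqrt n * specNorm (Gmat τ W H))) ∧
         (∀ j : Fin K × Fin n, betaCoef τ W H j ≤ -(specNorm (Gmat τ W H) / Real.sqrt n))) := by
  refine ⟨fun hmin => ?_, fun ⟨hα, _⟩ W' H' hW' hH' => ceRisk_le_of_alphaCoef_le hτ.le hα hW' hH'⟩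
  have hETF := etfFrame_mem_OB hK hdK
  obtain ⟨hbar, hcollapse, hsoftmax⟩ := structure_of_ceRisk_le_etfLoss hK hn hτ hW hH
    ((hmin _ _ hETF (submatrix_mem_OB hETF Prod.fst)).trans_eq (ceRisk_etfFrame hK hdK hn τ))
  have hG := Gmat_eq_smul_classContrast hsoftmax
  set c := etfOffProb K τ / (K * n)
  have hspec : specNorm (Gmat τ W H) = c * (K * √n) := by
    have hc : 0 ≤ c := (div_pos (etfOffProb_pos (by omega) τ) (by positivity)).le
    rw [hG, specNorm_smul, specNorm_classContrast hK hn, abs_of_nonneg hc]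
  have hsqrt : √(n : ℝ) * √n = n := Real.mul_self_sqrt n.cast_nonneg
  refine ⟨fun k => le_of_eq ?_, fun j => le_of_eq ?_⟩
  · rw [alphaCoef_of_collapse hW hbar hcollapse hG, hspec]
    linear_combination (c * K) * hsqrt
  · rw [betaCoef_of_collapse hW hbar hcollapse hG, hspec]
    field_simp

theorem critical_point_global_iff_alpha_beta (d K n : ℕ) (hK : 2 ≤ K) (hdK : K ≤ d) (hn : 1 ≤ n)
    (τ : ℝ) (hτ : 0 < τ)
    (W : Matrix (Fin d) (Fin K) ℝ) (H : Matrix (Fin d) (Fin K × Fin n) ℝ)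
    (hW : W ∈ OB d (Fin K)) (hH : H ∈ OB d (Fin K × Fin n))
    (hcrit : IsCriticalPoint τ W H) :
    (∀ (W' : Matrix (Fin d) (Fin K) ℝ) (H' : Matrix (Fin d) (Fin K × Fin n) ℝ),
        W' ∈ OB d (Fin K) → H' ∈ OB d (Fin K × Fin n) → ceRisk τ W H ≤ ceRisk τ W' H')
      ↔ ((∀ k : Fin K, alphaCoef τ W H k ≤ -(Real.sqrt n * specNorm (Gmat τ W H))) ∧
         (∀ j : Fin K × Fin n, betaCoef τ W H j ≤ -(specNorm (Gmat τ W H) / Real.sqrt n))) :=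
  critical_point_global_iff_alpha_beta_general d K n hK hdK hn τ hτ W H hW hH
end

section
/- Let d ≥ K ≥ 2, n ≥ 1, N = Kn, τ > 0, and let a ∈ [0,1] be the label-smoothing parameter. (i) If W₁ ∈ OB(d,K) satisfies W₁ᵀW₁ = (K/(K−1))·(I_K − (1/K)·1_K1_Kᵀ) and H₁ ∈ ℝ^{d×N} has its column indexed by (k,i) equal to the k-th column of W₁ for all k,i, then f_LS(W₁,H₁) = log(1 + (K−1)·exp(−Kτ/(K−1))) + aτ. (ii) If u ∈ ℝ^d is a unit vector, W₂ = u·1_Kᵀ and H₂ = u·1_Nᵀ, then f_LS(W₂,H₂) = log K. Consequently, if a > 0 and aτ ≥ log K, then (W₁,H₁) is not a global minimizer of f_LS over OB(d,K) × OB(d,N), since f_LS(W₁,H₁) > f_LS(W₂,H₂). -/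
open scoped BigOperators Matrix

/-- Label-smoothing loss with smoothing parameter `a`. -/
noncomputable def LLS {K : ℕ} (a : ℝ) (z : Fin K → ℝ) (k : Fin K) : ℝ :=
  -(1 - a * ((K : ℝ) - 1) / K) * Real.log (Real.exp (z k) / ∑ ℓ, Real.exp (z ℓ))
    - (a / K) * ∑ j ∈ Finset.univ.erase k, Real.log (Real.exp (z j) / ∑ ℓ, Real.exp (z ℓ))

/-- Label-smoothing risk `f_LS(W,H) = (1/N) ∑_k ∑_i L_LS(τ Wᵀ h_{k,i}, k)` with `N = K n`. -/
noncomputable def lsRisk {d K n : ℕ} (τ a : ℝ) (W : Matrix (Fin d) (Fin K) ℝ)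
    (H : Matrix (Fin d) (Fin K × Fin n) ℝ) : ℝ :=
  (1 / ((K : ℝ) * n)) * ∑ k : Fin K, ∑ i : Fin n,
    LLS a (fun ℓ => τ * ∑ r, W r ℓ * H r (k, i)) k

/-! Both configurations give every sample of class `k` the logits `z_ℓ = α` for `ℓ = k` and
`z_ℓ = β` otherwise (`α = τ`, `β = -τ/(K-1)` for the simplex ETF, `α = β = τ` for the rank-one
collapse). On such logits the label-smoothing loss is `log (1 + (K-1) e^{β-α}) + a (K-1)/K (α-β)`,
so the risk equals this per-sample value. The ETF value exceeds `a τ ≥ log K`, the value of the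
rank-one configuration, which lies on the oblique manifold. -/

open Real Finset

lemma card_univ_erase_cast {K : ℕ} (k : Fin K) : ((univ.erase k).card : ℝ) = K - 1 := by
  rw [card_erase_of_mem (mem_univ k), card_univ, Fintype.card_fin, Nat.cast_pred k.pos]

lemma sum_exp_ite_eq {K : ℕ} (k : Fin K) (α β : ℝ) :
    ∑ ℓ, exp (if ℓ = k then α else β) = exp α * (1 + (K - 1) * exp (β - α)) := by
  rw [← add_sum_erase _ _ (mem_univ k), if_pos rfl,
    sum_congr rfl fun j hj => by rw [if_neg (ne_of_mem_erase hj)], sum_const, nsmul_eq_mul,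
    card_univ_erase_cast, exp_sub]
  field_simp

lemma LLS_ite_eq {K : ℕ} (a α β : ℝ) (k : Fin K) :
    LLS a (fun ℓ => if ℓ = k then α else β) k
      = log (1 + (K - 1) * exp (β - α)) + a * ((K - 1) / K) * (α - β) := by
  have hpos : 0 < 1 + ((K : ℝ) - 1) * exp (β - α) := by
    have : (1 : ℝ) ≤ K := by exact_mod_cast k.pos
    nlinarith [exp_pos (β - α)]
  have hlog_softmax : ∀ γ, log (exp γ / ∑ ℓ, exp (if ℓ = k then α else β))
      = γ - α - log (1 + (K - 1) * exp (β - α)) := by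
    intro γ
    rw [sum_exp_ite_eq, log_div (exp_ne_zero _) (by positivity),
      log_mul (exp_ne_zero _) hpos.ne', log_exp, log_exp]
    ring
  simp only [LLS, if_true, hlog_softmax]
  rw [sum_congr rfl fun j hj => by rw [if_neg (ne_of_mem_erase hj)], sum_const, nsmul_eq_mul,
    card_univ_erase_cast]
  ring

lemma LLS_const {K : ℕ} (a α : ℝ) (k : Fin K) : LLS a (fun _ => α) k = log K := by
  simpa using LLS_ite_eq a α α k

lemma simplexETF_apply {K : ℕ} (hK : 1 < K) (ℓ k : Fin K) :
    (((K : ℝ) / ((K : ℝ) - 1)) •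
      ((1 : Matrix (Fin K) (Fin K) ℝ) - ((K : ℝ))⁻¹ • Matrix.of fun _ _ => (1 : ℝ)) :
        Matrix (Fin K) (Fin K) ℝ) ℓ k
      = if ℓ = k then 1 else -1 / ((K : ℝ) - 1) := by
  have : (K : ℝ) - 1 ≠ 0 := sub_ne_zero.mpr (by exact_mod_cast hK.ne')
  simp only [Matrix.smul_apply, Matrix.sub_apply, Matrix.one_apply, Matrix.of_apply, smul_eq_mul]
  split_ifs
  · field_simp
  · field_simp
    ring

lemma LLS_simplexETF {d K : ℕ} (hK : 1 < K) (a τ : ℝ) (W : Matrix (Fin d) (Fin K) ℝ)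
    (hETF : Wᵀ * W = ((K : ℝ) / ((K : ℝ) - 1)) •
      ((1 : Matrix (Fin K) (Fin K) ℝ) - ((K : ℝ))⁻¹ • Matrix.of fun _ _ => (1 : ℝ)))
    (k : Fin K) :
    LLS a (fun ℓ => τ * (Wᵀ * W) ℓ k) k
      = log (1 + ((K : ℝ) - 1) * exp (-((K : ℝ) * τ) / ((K : ℝ) - 1))) + a * τ := by
  have hK' : (K : ℝ) - 1 ≠ 0 := sub_ne_zero.mpr (by exact_mod_cast hK.ne')
  have hlogits :
      (fun ℓ => τ * (Wᵀ * W) ℓ k) = fun ℓ => if ℓ = k then τ else -τ / ((K : ℝ) - 1) := by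
    funext ℓ
    rw [hETF, simplexETF_apply hK]
    split_ifs <;> ring
  have hexponent : -τ / ((K : ℝ) - 1) - τ = -((K : ℝ) * τ) / ((K : ℝ) - 1) := by
    field_simp
    ring
  have hsmoothing : a * (((K : ℝ) - 1) / K) * (τ - -τ / ((K : ℝ) - 1)) = a * τ := by
    have hK0 : (K : ℝ) ≠ 0 := by positivity
    field_simp
    ring
  rw [hlogits, LLS_ite_eq, hexponent, hsmoothing]

lemma lsRisk_eq_of_forall_LLS_eq {d K n : ℕ} (hK : K ≠ 0) (hn : n ≠ 0) (τ a c : ℝ)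
    (W : Matrix (Fin d) (Fin K) ℝ) (H : Matrix (Fin d) (Fin K × Fin n) ℝ)
    (h : ∀ k i, LLS a (fun ℓ => τ * ∑ r, W r ℓ * H r (k, i)) k = c) :
    lsRisk τ a W H = c := by
  simp only [lsRisk, h, sum_const, card_univ, Fintype.card_fin, nsmul_eq_mul]
  field_simp

lemma log_one_add_mul_exp_pos {x : ℝ} (hx : 0 < x) (y : ℝ) : 0 < log (1 + x * exp y) :=
  log_pos (by nlinarith [exp_pos y])

theorem label_smoothing_values_and_non_optimality_general (d K n : ℕ) (hK : 2 ≤ K)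
    (hn : 1 ≤ n) (τ : ℝ) (a : ℝ)
    (W₁ : Matrix (Fin d) (Fin K) ℝ)
    (hETF : W₁ᵀ * W₁ = ((K : ℝ) / ((K : ℝ) - 1)) •
      ((1 : Matrix (Fin K) (Fin K) ℝ) - ((K : ℝ))⁻¹ • Matrix.of fun _ _ => (1 : ℝ)))
    (H₁ : Matrix (Fin d) (Fin K × Fin n) ℝ)
    (hH₁ : ∀ (r : Fin d) (k : Fin K) (i : Fin n), H₁ r (k, i) = W₁ r k)
    (u : Fin d → ℝ) (hu : ∑ r, (u r) ^ 2 = 1)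
    (W₂ : Matrix (Fin d) (Fin K) ℝ) (hW₂ : ∀ (r : Fin d) (k : Fin K), W₂ r k = u r)
    (H₂ : Matrix (Fin d) (Fin K × Fin n) ℝ)
    (hH₂ : ∀ (r : Fin d) (j : Fin K × Fin n), H₂ r j = u r) :
    -- (i) value at the simplex-ETF collapsed configuration
    lsRisk τ a W₁ H₁
        = Real.log (1 + ((K : ℝ) - 1) * Real.exp (-((K : ℝ) * τ) / ((K : ℝ) - 1))) + a * τ ∧
    -- (ii) value at the fully collapsed rank-one configuration
    lsRisk τ a W₂ H₂ = Real.log (K : ℝ) ∧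
    -- (iii) if `a > 0` and `a τ ≥ log K`, then `(W₁,H₁)` is not a global minimizer
    (0 < a → Real.log (K : ℝ) ≤ a * τ →
      lsRisk τ a W₂ H₂ < lsRisk τ a W₁ H₁ ∧
      ¬ (∀ (W' : Matrix (Fin d) (Fin K) ℝ) (H' : Matrix (Fin d) (Fin K × Fin n) ℝ),
          W' ∈ OB d (Fin K) → H' ∈ OB d (Fin K × Fin n) →
          lsRisk τ a W₁ H₁ ≤ lsRisk τ a W' H')) := by
  have hK0 : K ≠ 0 := by omega
  have hn0 : n ≠ 0 := by omega
  have hi := lsRisk_eq_of_forall_LLS_eq hK0 hn0 τ a _ W₁ H₁ fun k i => by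
    simp only [hH₁]
    exact LLS_simplexETF hK a τ W₁ hETF k
  have huu : ∑ r, u r * u r = 1 := by simpa only [sq] using hu
  have hii := lsRisk_eq_of_forall_LLS_eq hK0 hn0 τ a _ W₂ H₂ fun k i => by
    simp only [hW₂, hH₂, huu, mul_one]
    exact LLS_const a τ k
  refine ⟨hi, hii, fun _ haτ => ?_⟩
  have hlt : lsRisk τ a W₂ H₂ < lsRisk τ a W₁ H₁ := by
    have : (0 : ℝ) < K - 1 := sub_pos.mpr (by exact_mod_cast hK)
    rw [hi, hii]
    linarith [log_one_add_mul_exp_pos this (-((K : ℝ) * τ) / ((K : ℝ) - 1))]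
  have hW₂_mem : W₂ ∈ OB d (Fin K) := fun k => by simpa only [hW₂] using hu
  have hH₂_mem : H₂ ∈ OB d (Fin K × Fin n) := fun j => by simpa only [hH₂] using hu
  exact ⟨hlt, fun hglob => (hglob W₂ H₂ hW₂_mem hH₂_mem).not_gt hlt⟩

theorem label_smoothing_values_and_non_optimality (d K n : ℕ) (hK : 2 ≤ K) (hdK : K ≤ d)
    (hn : 1 ≤ n) (τ : ℝ) (hτ : 0 < τ) (a : ℝ) (ha0 : 0 ≤ a) (ha1 : a ≤ 1)
    (W₁ : Matrix (Fin d) (Fin K) ℝ) (hW₁ : W₁ ∈ OB d (Fin K))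
    (hETF : W₁ᵀ * W₁ = ((K : ℝ) / ((K : ℝ) - 1)) •
      ((1 : Matrix (Fin K) (Fin K) ℝ) - ((K : ℝ))⁻¹ • Matrix.of fun _ _ => (1 : ℝ)))
    (H₁ : Matrix (Fin d) (Fin K × Fin n) ℝ)
    (hH₁ : ∀ (r : Fin d) (k : Fin K) (i : Fin n), H₁ r (k, i) = W₁ r k)
    (u : Fin d → ℝ) (hu : ∑ r, (u r) ^ 2 = 1)
    (W₂ : Matrix (Fin d) (Fin K) ℝ) (hW₂ : ∀ (r : Fin d) (k : Fin K), W₂ r k = u r)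
    (H₂ : Matrix (Fin d) (Fin K × Fin n) ℝ)
    (hH₂ : ∀ (r : Fin d) (j : Fin K × Fin n), H₂ r j = u r) :
    -- (i) value at the simplex-ETF collapsed configuration
    lsRisk τ a W₁ H₁
        = Real.log (1 + ((K : ℝ) - 1) * Real.exp (-((K : ℝ) * τ) / ((K : ℝ) - 1))) + a * τ ∧
    -- (ii) value at the fully collapsed rank-one configuration
    lsRisk τ a W₂ H₂ = Real.log (K : ℝ) ∧
    -- (iii) if `a > 0` and `a τ ≥ log K`, then `(W₁,H₁)` is not a global minimizer
    (0 < a → Real.log (K : ℝ) ≤ a * τ →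
      lsRisk τ a W₂ H₂ < lsRisk τ a W₁ H₁ ∧
      ¬ (∀ (W' : Matrix (Fin d) (Fin K) ℝ) (H' : Matrix (Fin d) (Fin K × Fin n) ℝ),
          W' ∈ OB d (Fin K) → H' ∈ OB d (Fin K × Fin n) →
          lsRisk τ a W₁ H₁ ≤ lsRisk τ a W' H')) :=
  label_smoothing_values_and_non_optimality_general d K n hK hn τ a W₁ hETF H₁ hH₁ u hu W₂ hW₂ H₂
    hH₂
end
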